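/- Let P_1, ..., P_K be idempotent matrices forming a resolution of identity (P_iP_j = δ_{ij}P_i, ΣP_i = I) and suppose they are orthogonal projections. For any matrix Y and any family of matrices N_j with ‖N_j‖_F ≤ Γ_j, the sum S = Σ_{i,j} c_{ij} P_i Y N_j satisfies ‖S‖_F ≤ Σ_j (max_i |c_{ij}|) Γ_j ‖Y‖_F, where c_{ij} ∈ ℂ. -/

import Mathlib

open Matrix

attribute [local instance] Matrix.frobeniusNormedAddCommGroup

lemma sq_norm_eq_trace {n : ℕ} (A : Matrix (Fin n) (Fin n) ℂ) :
    ‖A‖ ^ 2 = (Matrix.trace (Aᴴ * A)).re := by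
  have h1 : ‖A‖ ^ 2 = ∑ i, ∑ j, ‖A i j‖ ^ 2 := by
    rw [Matrix.frobenius_norm_def]
    rw [← Real.rpow_natCast _ 2, ← Real.rpow_mul (by positivity)]
    norm_num
  rw [h1, Matrix.trace, Complex.re_sum]
  rw [Finset.sum_comm]
  refine Finset.sum_congr rfl fun j _ => ?_
  simp only [Matrix.diag_apply, Matrix.mul_apply, Complex.re_sum, Matrix.conjTranspose_apply]
  refine Finset.sum_congr rfl fun i _ => ?_
  simp [Complex.normSq_apply, Complex.mul_re, ← Complex.normSq_eq_norm_sq,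
    Complex.normSq_apply]

lemma key_bound {n K : ℕ} (P : Fin K → Matrix (Fin n) (Fin n) ℂ)
    (hPsa : ∀ i, (P i)ᴴ = P i)
    (hPorth : ∀ i j, P i * P j = if i = j then P i else 0)
    (hPsum : ∑ i, P i = 1)
    (Y : Matrix (Fin n) (Fin n) ℂ) (d : Fin K → ℂ) :
    ‖∑ i, d i • (P i * Y)‖ ≤ (⨆ i, ‖d i‖) * ‖Y‖ := by
  rcases Nat.eq_zero_or_pos K with hK | hK
  · subst hK
    simp [Real.iSup_of_isEmpty]
  have : Nonempty (Fin K) := ⟨⟨0, hK⟩⟩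
  set M : ℝ := ⨆ i, ‖d i‖ with hM
  have hbdd : BddAbove (Set.range fun i => ‖d i‖) :=
    Set.Finite.bddAbove (Set.finite_range _)
  have hMi : ∀ i, ‖d i‖ ≤ M := fun i => le_ciSup hbdd i
  have hM0 : 0 ≤ M := le_trans (norm_nonneg _) (hMi (Classical.arbitrary _))
  set S := ∑ i, d i • (P i * Y) with hS
  have h2 : Sᴴ * S = ∑ i, (Complex.normSq (d i) : ℂ) • (Yᴴ * P i * Y) := by
    rw [hS, conjTranspose_sum, Finset.sum_mul]
    refine Finset.sum_congr rfl fun i _ => ?_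
    rw [Finset.mul_sum]
    rw [Finset.sum_eq_single i]
    · simp only [conjTranspose_smul, conjTranspose_mul, hPsa]
      rw [smul_mul_smul_comm]
      have hc : star (d i) * d i = (Complex.normSq (d i) : ℂ) := by
        rw [Complex.star_def, mul_comm, Complex.mul_conj]
      have hm : Yᴴ * P i * (P i * Y) = Yᴴ * P i * Y := by
        rw [← mul_assoc, mul_assoc Yᴴ (P i) (P i), hPorth]
        simp
      rw [hc, hm]
    · intro b _ hb
      simp only [conjTranspose_smul, conjTranspose_mul, hPsa]
      rw [smul_mul_smul_comm, ← mul_assoc, mul_assoc Yᴴ (P i) (P b), hPorth,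
        if_neg (Ne.symm hb)]
      simp
    · simp
  have hterm : ∀ i, (Matrix.trace (Yᴴ * P i * Y)).re = ‖P i * Y‖ ^ 2 := by
    intro i
    rw [sq_norm_eq_trace]
    have hm : (P i * Y)ᴴ * (P i * Y) = Yᴴ * P i * Y := by
      rw [conjTranspose_mul, hPsa, ← mul_assoc, mul_assoc Yᴴ (P i) (P i), hPorth]
      simp
    rw [hm]
  have hsum : ∑ i, (Matrix.trace (Yᴴ * P i * Y)).re = ‖Y‖ ^ 2 := by
    have : ∑ i, Matrix.trace (Yᴴ * P i * Y) = Matrix.trace (Yᴴ * Y) := by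
      rw [← Matrix.trace_sum]
      congr 1
      rw [← Finset.sum_mul, ← Finset.mul_sum, hPsum, mul_one]
    rw [← Complex.re_sum, this, sq_norm_eq_trace]
  have hS2 : ‖S‖ ^ 2 = ∑ i, Complex.normSq (d i) * (Matrix.trace (Yᴴ * P i * Y)).re := by
    rw [sq_norm_eq_trace, h2, Matrix.trace_sum, Complex.re_sum]
    refine Finset.sum_congr rfl fun i _ => ?_
    rw [Matrix.trace_smul]
    simp [Complex.smul_re]
  have hle : ‖S‖ ^ 2 ≤ (M * ‖Y‖) ^ 2 := by
    rw [hS2]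
    have : ∀ i, Complex.normSq (d i) * (Matrix.trace (Yᴴ * P i * Y)).re ≤
        M ^ 2 * (Matrix.trace (Yᴴ * P i * Y)).re := by
      intro i
      apply mul_le_mul_of_nonneg_right
      · rw [Complex.normSq_eq_norm_sq]
        exact pow_le_pow_left₀ (norm_nonneg _) (hMi i) 2
      · rw [hterm i]; positivity
    calc ∑ i, Complex.normSq (d i) * (Matrix.trace (Yᴴ * P i * Y)).re
        ≤ ∑ i, M ^ 2 * (Matrix.trace (Yᴴ * P i * Y)).re := Finset.sum_le_sum fun i _ => this i
      _ = M ^ 2 * ‖Y‖ ^ 2 := by rw [← Finset.mul_sum, hsum]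
      _ = (M * ‖Y‖) ^ 2 := by ring
  nlinarith [norm_nonneg S, mul_nonneg hM0 (norm_nonneg Y)]

theorem projector_nilpotent_sum_norm_bound (n K L : ℕ)
    (P : Fin K → Matrix (Fin n) (Fin n) ℂ)
    (hPsa : ∀ i, (P i)ᴴ = P i)
    (hPorth : ∀ i j, P i * P j = if i = j then P i else 0)
    (hPsum : ∑ i, P i = 1)
    (N : Fin L → Matrix (Fin n) (Fin n) ℂ)
    (Γ : Fin L → ℝ) (hΓ : ∀ j, ‖N j‖ ≤ Γ j)
    (Y : Matrix (Fin n) (Fin n) ℂ)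
    (c : Fin K → Fin L → ℂ) :
    ‖∑ i, ∑ j, c i j • (P i * Y * N j)‖ ≤
      ∑ j, (⨆ i, ‖c i j‖) * Γ j * ‖Y‖ := by
  have hrw : ∑ i, ∑ j, c i j • (P i * Y * N j)
      = ∑ j, (∑ i, c i j • (P i * Y)) * N j := by
    rw [Finset.sum_comm]
    refine Finset.sum_congr rfl fun j _ => ?_
    rw [Finset.sum_mul]
    exact Finset.sum_congr rfl fun i _ => by rw [smul_mul_assoc]
  rw [hrw]
  refine le_trans (norm_sum_le _ _) (Finset.sum_le_sum fun j _ => ?_)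
  have h1 : ‖(∑ i, c i j • (P i * Y)) * N j‖ ≤ ‖∑ i, c i j • (P i * Y)‖ * ‖N j‖ :=
    Matrix.frobenius_norm_mul _ _
  have h2 := key_bound P hPsa hPorth hPsum Y (fun i => c i j)
  have hΓ0 : 0 ≤ Γ j := le_trans (norm_nonneg _) (hΓ j)
  calc ‖(∑ i, c i j • (P i * Y)) * N j‖
      ≤ ‖∑ i, c i j • (P i * Y)‖ * ‖N j‖ := h1
    _ ≤ ((⨆ i, ‖c i j‖) * ‖Y‖) * Γ j := by
        apply mul_le_mul h2 (hΓ j) (norm_nonneg _)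
        exact le_trans (norm_nonneg _) h2
    _ = (⨆ i, ‖c i j‖) * Γ j * ‖Y‖ := by ring
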